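/- Let c ∈ [0,1] be a point of the ternary Cantor set C with ternary expansion (c_n) ∈ {0,2}^ℕ, and suppose infinitely many c_n equal 0 (enumerated increasingly as (i_n)). Define d_1 = 1, d_{2k} = 1 − Σ_{j=1}^{k-1} 2/3^{i_j} − 1/3^{i_k}, and d_{2k+1} = 1 − Σ_{j=1}^{k-1} 2/3^{i_j} − 2/3^{i_k}. Then each d_n belongs to C, has finite ternary expansion, d_n > c for all n, and (d_n) converges to c. -/

import Mathlib

/-!
Write `S m` for the sum of the first `m` terms of the ternary expansion of `c`. Every digit
before the `k`-th zero of `c`, at position `p`, is a `2` except at the earlier zeros, so the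
defining formulas become `d (2k) = S (p+1) + 2/3^(p+1)` and `d (2k+1) = S (p+1) + 1/3^(p+1)`:
`d (2k)` is `c` cut after position `p` with its zero there replaced by a `2`, and `d (2k+1)` is
`c` cut after position `p` and continued by `2`s. Both are Cantor points with denominator
`3^(p+1)`. They exceed `c` because the tail of `c` after position `p` is at most `1/3^(p+1)`, with
strict inequality since a later digit vanishes; and they tend to `c` because `S (p+1) → c` as the
zero positions tend to infinity.
-/

open Set Filter

/-- The ternary Cantor set: points of `[0,1]` with a ternary expansion using digits 0 and 2. -/
def ternaryCantorSet : Set ℝ :=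
  {x | x ∈ Icc (0:ℝ) 1 ∧ ∃ g : ℕ → ℕ, (∀ n, g n = 0 ∨ g n = 2) ∧
    x = ∑' n : ℕ, (g n : ℝ) / 3 ^ (n + 1)}

def IsFiniteCantorPointAbove (c x : ℝ) : Prop :=
  x ∈ ternaryCantorSet ∧ (∃ N : ℕ, ∃ z : ℤ, x = (z : ℝ) / 3 ^ N) ∧ c < x

lemma hasSum_two_div_three_pow (m : ℕ) :
    HasSum (fun i : ℕ ↦ (2 : ℝ) / 3 ^ (i + m + 1)) (1 / 3 ^ m) := by
  have h := (hasSum_geometric_of_lt_one (r := (1 / 3 : ℝ)) (by norm_num) (by norm_num)).mul_left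
    (2 / 3 ^ (m + 1))
  have hterm : (fun i : ℕ ↦ 2 / 3 ^ (m + 1) * (1 / 3 : ℝ) ^ i) = fun i ↦ 2 / 3 ^ (i + m + 1) := by
    funext i
    rw [one_div_pow, pow_add, pow_add]
    field_simp
    ring
  have hsum : 2 / 3 ^ (m + 1) * (1 - 1 / 3 : ℝ)⁻¹ = 1 / 3 ^ m := by
    rw [pow_succ]
    field_simp
    norm_num
  rwa [hterm, hsum] at h

lemma sum_range_two_div_three_pow (m : ℕ) :
    ∑ n ∈ Finset.range m, (2 : ℝ) / 3 ^ (n + 1) = 1 - 1 / 3 ^ m := by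
  induction m with
  | zero => simp
  | succ m ih =>
    rw [Finset.sum_range_succ, ih, pow_succ]
    field_simp
    ring

lemma exists_int_sum_range_eq_div (g : ℕ → ℕ) (m : ℕ) :
    ∃ z : ℤ, ∑ n ∈ Finset.range m, (g n : ℝ) / 3 ^ (n + 1) = z / 3 ^ m := by
  induction m with
  | zero => exact ⟨0, by simp⟩
  | succ m ih =>
    obtain ⟨z, hz⟩ := ih
    refine ⟨3 * z + g m, ?_⟩
    rw [Finset.sum_range_succ, hz, pow_succ]
    push_cast
    field_simp

lemma exists_int_sum_range_add_div_eq (g : ℕ → ℕ) (a m : ℕ) :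
    ∃ z : ℤ, ∑ n ∈ Finset.range m, (g n : ℝ) / 3 ^ (n + 1) + a / 3 ^ m = z / 3 ^ m := by
  obtain ⟨z, hz⟩ := exists_int_sum_range_eq_div g m
  exact ⟨z + a, by rw [hz]; push_cast; ring⟩

lemma image_range_eq_filter_range {p : ℕ → Prop} [DecidablePred p] {I : ℕ → ℕ}
    (hI : StrictMono I) (hpI : ∀ j, p (I j)) (hIp : ∀ n, p n → ∃ j, I j = n) (k : ℕ) :
    (Finset.range k).image I = (Finset.range (I k)).filter p := by
  ext n
  simp only [Finset.mem_image, Finset.mem_range, Finset.mem_filter]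
  constructor
  · rintro ⟨j, hj, rfl⟩
    exact ⟨hI hj, hpI j⟩
  · rintro ⟨hn, hp⟩
    obtain ⟨j, rfl⟩ := hIp n hp
    exact ⟨j, hI.lt_iff_lt.mp hn, rfl⟩

lemma tendsto_of_tendsto_even_of_tendsto_odd {α : Type*} {f : ℕ → α} {l : Filter α}
    (heven : Tendsto (fun k ↦ f (2 * k)) atTop l) (hodd : Tendsto (fun k ↦ f (2 * k + 1)) atTop l) :
    Tendsto f atTop l := by
  intro s hs
  obtain ⟨a, ha⟩ := eventually_atTop.1 (heven hs)
  obtain ⟨b, hb⟩ := eventually_atTop.1 (hodd hs)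
  refine eventually_atTop.2 ⟨2 * (a + b), fun n hn ↦ ?_⟩
  obtain ⟨k, rfl | rfl⟩ := Nat.even_or_odd' n
  exacts [ha k (by omega), hb k (by omega)]

section Digits

variable {g : ℕ → ℕ}

lemma le_two_of_forall_eq_zero_or_eq_two (hg : ∀ n, g n = 0 ∨ g n = 2) (n : ℕ) : g n ≤ 2 := by
  rcases hg n with h | h <;> omega

lemma summable_ternary (hg : ∀ n, g n ≤ 2) : Summable (fun n ↦ (g n : ℝ) / 3 ^ (n + 1)) := by
  refine Summable.of_nonneg_of_le (fun n ↦ by positivity) (fun n ↦ ?_)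
    (hasSum_two_div_three_pow 0).summable
  gcongr
  exact_mod_cast hg n

lemma tsum_ternary_eq_sum_range_add_tail (hg : ∀ n, g n ≤ 2) (m : ℕ) :
    ∑' n, (g n : ℝ) / 3 ^ (n + 1) =
      ∑ n ∈ Finset.range m, (g n : ℝ) / 3 ^ (n + 1) + ∑' i, (g (i + m) : ℝ) / 3 ^ (i + m + 1) :=
  ((summable_ternary hg).sum_add_tsum_nat_add m).symm

lemma tsum_ternary_tail_le (hg : ∀ n, g n ≤ 2) (m : ℕ) :
    ∑' i, (g (i + m) : ℝ) / 3 ^ (i + m + 1) ≤ 1 / 3 ^ m := by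
  rw [← (hasSum_two_div_three_pow m).tsum_eq]
  refine Summable.tsum_le_tsum (fun i ↦ ?_) ((summable_nat_add_iff m).2 (summable_ternary hg))
    (hasSum_two_div_three_pow m).summable
  gcongr
  exact_mod_cast hg _

lemma tsum_ternary_tail_lt (hg : ∀ n, g n ≤ 2) {m p : ℕ} (hmp : m ≤ p) (hp : g p = 0) :
    ∑' i, (g (i + m) : ℝ) / 3 ^ (i + m + 1) < 1 / 3 ^ m := by
  rw [← (hasSum_two_div_three_pow m).tsum_eq]
  refine Summable.tsum_lt_tsum (i := p - m) (fun i ↦ ?_) ?_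
    ((summable_nat_add_iff m).2 (summable_ternary hg)) (hasSum_two_div_three_pow m).summable
  · dsimp only
    gcongr
    exact_mod_cast hg _
  · simp [Nat.sub_add_cancel hmp, hp]

lemma tsum_ternary_lt_sum_range_add_two_div (hg : ∀ n, g n ≤ 2) (m : ℕ) :
    ∑' n, (g n : ℝ) / 3 ^ (n + 1) < ∑ n ∈ Finset.range m, (g n : ℝ) / 3 ^ (n + 1) + 2 / 3 ^ m := by
  have hlt : (1 : ℝ) / 3 ^ m < 2 / 3 ^ m := by gcongr; norm_num
  rw [tsum_ternary_eq_sum_range_add_tail hg m]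
  linarith [tsum_ternary_tail_le hg m]

lemma tsum_ternary_lt_sum_range_add_one_div (hg : ∀ n, g n ≤ 2) {m p : ℕ} (hmp : m ≤ p)
    (hp : g p = 0) :
    ∑' n, (g n : ℝ) / 3 ^ (n + 1) < ∑ n ∈ Finset.range m, (g n : ℝ) / 3 ^ (n + 1) + 1 / 3 ^ m := by
  rw [tsum_ternary_eq_sum_range_add_tail hg m]
  exact add_lt_add_right (tsum_ternary_tail_lt hg hmp hp) _

lemma tendsto_sum_range_ternary_add_div (hg : ∀ n, g n ≤ 2) {m : ℕ → ℕ}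
    (hm : Tendsto m atTop atTop) (a : ℝ) :
    Tendsto (fun k ↦ ∑ n ∈ Finset.range (m k), (g n : ℝ) / 3 ^ (n + 1) + a / 3 ^ m k) atTop
      (nhds (∑' n, (g n : ℝ) / 3 ^ (n + 1))) := by
  have hpow : Tendsto (fun n : ℕ ↦ a / (3 : ℝ) ^ n) atTop (nhds 0) :=
    tendsto_const_nhds.div_atTop (tendsto_pow_atTop_atTop_of_one_lt (by norm_num))
  simpa using ((summable_ternary hg).tendsto_sum_tsum_nat.comp hm).add (hpow.comp hm)

lemma tsum_ternary_mem_cantorSet (hg : ∀ n, g n = 0 ∨ g n = 2) :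
    ∑' n, (g n : ℝ) / 3 ^ (n + 1) ∈ ternaryCantorSet := by
  refine ⟨⟨tsum_nonneg fun n ↦ by positivity, ?_⟩, g, hg, rfl⟩
  simpa using tsum_ternary_tail_le (le_two_of_forall_eq_zero_or_eq_two hg) 0

lemma sum_range_add_tsum_mem_cantorSet (hg : ∀ n, g n = 0 ∨ g n = 2) {h : ℕ → ℕ}
    (hh : ∀ i, h i = 0 ∨ h i = 2) (m : ℕ) :
    ∑ n ∈ Finset.range m, (g n : ℝ) / 3 ^ (n + 1) + ∑' i, (h i : ℝ) / 3 ^ (i + m + 1) ∈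
      ternaryCantorSet := by
  set f : ℕ → ℕ := fun n ↦ if n < m then g n else h (n - m) with hf_def
  have hf : ∀ n, f n = 0 ∨ f n = 2 := fun n ↦ by
    simp only [hf_def]
    split_ifs
    exacts [hg n, hh _]
  convert tsum_ternary_mem_cantorSet hf using 1
  rw [tsum_ternary_eq_sum_range_add_tail (le_two_of_forall_eq_zero_or_eq_two hf) m]
  congr 1
  · refine Finset.sum_congr rfl fun n hn ↦ ?_
    simp [hf_def, Finset.mem_range.mp hn]
  · simp [hf_def]

lemma sum_range_add_two_div_mem_cantorSet (hg : ∀ n, g n = 0 ∨ g n = 2) {m : ℕ} (hm : g m = 0) :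
    ∑ n ∈ Finset.range (m + 1), (g n : ℝ) / 3 ^ (n + 1) + 2 / 3 ^ (m + 1) ∈ ternaryCantorSet := by
  have h := sum_range_add_tsum_mem_cantorSet hg (h := fun i ↦ if i = 0 then 2 else 0)
    (fun i ↦ by split_ifs <;> simp) m
  rw [tsum_eq_single 0 fun i hi ↦ by simp [hi]] at h
  simpa [Finset.sum_range_succ, hm] using h

lemma sum_range_add_one_div_mem_cantorSet (hg : ∀ n, g n = 0 ∨ g n = 2) (m : ℕ) :
    ∑ n ∈ Finset.range m, (g n : ℝ) / 3 ^ (n + 1) + 1 / 3 ^ m ∈ ternaryCantorSet := by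
  have h := sum_range_add_tsum_mem_cantorSet hg (h := fun _ ↦ 2) (fun _ ↦ Or.inr rfl) m
  rwa [← (hasSum_two_div_three_pow m).tsum_eq]

lemma isFiniteCantorPointAbove_sum_range_add_two_div (hg : ∀ n, g n = 0 ∨ g n = 2) {m : ℕ}
    (hm : g m = 0) :
    IsFiniteCantorPointAbove (∑' n, (g n : ℝ) / 3 ^ (n + 1))
      (∑ n ∈ Finset.range (m + 1), (g n : ℝ) / 3 ^ (n + 1) + 2 / 3 ^ (m + 1)) :=
  ⟨sum_range_add_two_div_mem_cantorSet hg hm, ⟨_, exists_int_sum_range_add_div_eq g 2 _⟩,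
    tsum_ternary_lt_sum_range_add_two_div (le_two_of_forall_eq_zero_or_eq_two hg) _⟩

lemma isFiniteCantorPointAbove_sum_range_add_one_div (hg : ∀ n, g n = 0 ∨ g n = 2) {m p : ℕ}
    (hmp : m ≤ p) (hp : g p = 0) :
    IsFiniteCantorPointAbove (∑' n, (g n : ℝ) / 3 ^ (n + 1))
      (∑ n ∈ Finset.range m, (g n : ℝ) / 3 ^ (n + 1) + 1 / 3 ^ m) :=
  ⟨sum_range_add_one_div_mem_cantorSet hg m, ⟨_, mod_cast exists_int_sum_range_add_div_eq g 1 _⟩,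
    tsum_ternary_lt_sum_range_add_one_div (le_two_of_forall_eq_zero_or_eq_two hg) hmp hp⟩

end Digits

-- The digits below `I k` are `2` except at the `k` zeros `I 0, …, I (k-1)`.
lemma sum_range_ternary_add_eq {g : ℕ → ℕ} (hg : ∀ n, g n = 0 ∨ g n = 2) {I : ℕ → ℕ}
    (hI : StrictMono I) (hI0 : ∀ k, g (I k) = 0) (hIall : ∀ n, g n = 0 → ∃ k, I k = n) (k : ℕ) :
    ∑ n ∈ Finset.range (I k), (g n : ℝ) / 3 ^ (n + 1) + 1 / 3 ^ (I k) =
      1 - ∑ j ∈ Finset.range k, 2 / (3 : ℝ) ^ (I j + 1) := by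
  have hdefect : ∑ n ∈ Finset.range (I k), (2 - (g n : ℝ)) / 3 ^ (n + 1) =
      ∑ j ∈ Finset.range k, 2 / (3 : ℝ) ^ (I j + 1) := by
    rw [← Finset.sum_image (f := fun n ↦ 2 / (3 : ℝ) ^ (n + 1)) hI.injective.injOn,
      image_range_eq_filter_range hI hI0 hIall, Finset.sum_filter]
    refine Finset.sum_congr rfl fun n _ ↦ ?_
    rcases hg n with h | h <;> simp [h]
  have hsplit : ∑ n ∈ Finset.range (I k), (g n : ℝ) / 3 ^ (n + 1) =
      ∑ n ∈ Finset.range (I k), (2 : ℝ) / 3 ^ (n + 1) -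
        ∑ n ∈ Finset.range (I k), (2 - (g n : ℝ)) / 3 ^ (n + 1) := by
    rw [← Finset.sum_sub_distrib]
    exact Finset.sum_congr rfl fun n _ ↦ by ring
  rw [hsplit, hdefect, sum_range_two_div_three_pow]
  ring

lemma one_sub_sum_sub_div_eq {g : ℕ → ℕ} (hg : ∀ n, g n = 0 ∨ g n = 2) {I : ℕ → ℕ}
    (hI : StrictMono I) (hI0 : ∀ k, g (I k) = 0) (hIall : ∀ n, g n = 0 → ∃ k, I k = n) (k : ℕ)
    {a b : ℝ} (hab : a + b = 3) :
    1 - ∑ j ∈ Finset.range k, 2 / (3 : ℝ) ^ (I j + 1) - a / 3 ^ (I k + 1) =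
      ∑ n ∈ Finset.range (I k + 1), (g n : ℝ) / 3 ^ (n + 1) + b / 3 ^ (I k + 1) := by
  obtain rfl : b = 3 - a := by linarith
  rw [← sum_range_ternary_add_eq hg hI hI0 hIall, Finset.sum_range_succ, hI0, pow_succ]
  field_simp
  ring

/-- Let `c` be a point of the ternary Cantor set with ternary digits `(c_n) ∈ {0,2}^ℕ` having
infinitely many zeros, enumerated increasingly by `I` (so the paper's `i_k` is `I (k-1) + 1`).
Define `d 1 = 1`, `d (2k) = 1 − Σ_{j=1}^{k-1} 2/3^{i_j} − 1/3^{i_k}` and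
`d (2k+1) = 1 − Σ_{j=1}^{k-1} 2/3^{i_j} − 2/3^{i_k}`. Then each `d n` (`n ≥ 1`) belongs to the
Cantor set, has finite ternary expansion, satisfies `d n > c`, and `(d n)` converges to `c`. -/
theorem stmt10 (c : ℝ) (digit : ℕ → ℕ)
    (hdig : ∀ n, digit n = 0 ∨ digit n = 2)
    (hc : c = ∑' n : ℕ, (digit n : ℝ) / 3 ^ (n + 1))
    (I : ℕ → ℕ) (hI : StrictMono I)
    (hI0 : ∀ k, digit (I k) = 0)
    (hIall : ∀ n, digit n = 0 → ∃ k, I k = n)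
    (d : ℕ → ℝ)
    (hd1 : d 1 = 1)
    (hd2 : ∀ k, 1 ≤ k → d (2 * k) =
      1 - (∑ j ∈ Finset.range (k - 1), 2 / (3:ℝ) ^ (I j + 1)) - 1 / (3:ℝ) ^ (I (k - 1) + 1))
    (hd3 : ∀ k, 1 ≤ k → d (2 * k + 1) =
      1 - (∑ j ∈ Finset.range (k - 1), 2 / (3:ℝ) ^ (I j + 1)) - 2 / (3:ℝ) ^ (I (k - 1) + 1)) :
    (∀ n, 1 ≤ n → d n ∈ ternaryCantorSet ∧ (∃ N : ℕ, ∃ z : ℤ, d n = (z : ℝ) / 3 ^ N) ∧ c < d n) ∧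
    Tendsto d atTop (nhds c) := by
  have hdig2 := le_two_of_forall_eq_zero_or_eq_two hdig
  have heven : ∀ k, d (2 * (k + 1)) =
      ∑ n ∈ Finset.range (I k + 1), (digit n : ℝ) / 3 ^ (n + 1) + 2 / 3 ^ (I k + 1) := fun k ↦ by
    rw [hd2 (k + 1) k.succ_pos, Nat.add_sub_cancel,
      one_sub_sum_sub_div_eq hdig hI hI0 hIall k (by norm_num : (1 : ℝ) + 2 = 3)]
  have hodd : ∀ k, d (2 * (k + 1) + 1) =
      ∑ n ∈ Finset.range (I k + 1), (digit n : ℝ) / 3 ^ (n + 1) + 1 / 3 ^ (I k + 1) := fun k ↦ by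
    rw [hd3 (k + 1) k.succ_pos, Nat.add_sub_cancel,
      one_sub_sum_sub_div_eq hdig hI hI0 hIall k (by norm_num : (2 : ℝ) + 1 = 3)]
  have hd1' : d 1 = ∑ n ∈ Finset.range 0, (digit n : ℝ) / 3 ^ (n + 1) + 1 / 3 ^ 0 := by simp [hd1]
  have hprops : ∀ n, 1 ≤ n → IsFiniteCantorPointAbove c (d n) := by
    intro n hn
    rw [hc]
    obtain ⟨k, rfl | rfl⟩ := Nat.even_or_odd' n
    · obtain ⟨k, rfl⟩ : ∃ j, k = j + 1 := ⟨k - 1, by omega⟩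
      rw [heven]
      exact isFiniteCantorPointAbove_sum_range_add_two_div hdig (hI0 k)
    rcases k with _ | k
    · rw [hd1']
      exact isFiniteCantorPointAbove_sum_range_add_one_div hdig (Nat.zero_le _) (hI0 0)
    · rw [hodd]
      exact isFiniteCantorPointAbove_sum_range_add_one_div hdig (hI k.lt_succ_self) (hI0 (k + 1))
  have hzeros : Tendsto (fun k ↦ I k + 1) atTop atTop :=
    (tendsto_add_atTop_nat 1).comp hI.tendsto_atTop
  refine ⟨hprops, tendsto_of_tendsto_even_of_tendsto_odd ?_ ?_⟩ <;>
    rw [← tendsto_add_atTop_iff_nat 1, hc]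
  · simpa only [heven] using tendsto_sum_range_ternary_add_div hdig2 hzeros 2
  · simpa only [hodd] using tendsto_sum_range_ternary_add_div hdig2 hzeros 1
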